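/- Let ψ : [0,T] → [0,∞) be absolutely continuous with ψ(0) = 0. Then φ := ψ^{1/(1−γ)} (i.e. φ(t) = ψ(t)^{1/(1−γ)}) is absolutely continuous on [0,T] with φ(0) = 0, φ ≥ 0, its a.e. derivative satisfies φ'(t) = (1/(1−γ)) ψ(t)^{γ/(1−γ)} ψ'(t) for a.e. t ∈ [0,T], and I_T(φ) = (1/(2σ²(1−γ)²)) ∫₀ᵀ ( ψ'(t) − β(1−γ)ψ(t) )² dt, as an equality in [0,∞]. -/

import Mathlib

/-!
Since `ψ` is the primitive of `ψ'`, it is absolutely continuous, and so is `φ = ψ ^ p` with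
`p = 1/(1-γ) ≥ 1`: the map `z ↦ z ^ p` is `C¹`, hence Lipschitz on the bounded range of `ψ`. By the
fundamental theorem of calculus for absolutely continuous functions, `φ` is the primitive of its
a.e. derivative, which the chain rule identifies with `p ψ ^ (p-1) ψ'`. Where `ψ > 0` the two rate
integrands agree by algebra. On the level set `{ψ = 0}` both vanish a.e., because a derivative is
zero at every point of a level set that is not isolated in it, and isolated points are countable.
-/

open MeasureTheory Set Filter
open scoped NNReal

theorem AbsolutelyContinuousOnInterval.congr {X : Type*} [PseudoMetricSpace X] {f g : ℝ → X}
    {a b : ℝ} (hf : AbsolutelyContinuousOnInterval f a b) (hfg : EqOn f g (uIcc a b)) :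
    AbsolutelyContinuousOnInterval g a b := by
  refine Tendsto.congr' ?_ hf
  filter_upwards [mem_inf_of_right (mem_principal_self _)] with E hE
  exact Finset.sum_congr rfl fun i hi => by rw [hfg (hE.1 i hi).1, hfg (hE.1 i hi).2]

theorem LipschitzOnWith.comp_absolutelyContinuousOnInterval {X Y : Type*} [PseudoMetricSpace X]
    [PseudoMetricSpace Y] {g : X → Y} {K : ℝ≥0} {s : Set X} {f : ℝ → X} {a b : ℝ}
    (hg : LipschitzOnWith K g s) (hf : AbsolutelyContinuousOnInterval f a b)
    (hfs : MapsTo f (uIcc a b) s) : AbsolutelyContinuousOnInterval (g ∘ f) a b := by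
  have hK := mul_zero (K : ℝ) ▸ Filter.Tendsto.const_mul (K : ℝ) hf
  refine squeeze_zero' (.of_forall fun E => Finset.sum_nonneg fun _ _ => dist_nonneg) ?_ hK
  filter_upwards [mem_inf_of_right (mem_principal_self _)] with E hE
  rw [Finset.mul_sum]
  exact Finset.sum_le_sum fun i hi =>
    hg.dist_le_mul _ (hfs (hE.1 i hi).1) _ (hfs (hE.1 i hi).2)

theorem ContDiff.comp_absolutelyContinuousOnInterval {E F : Type*} [NormedAddCommGroup E]
    [NormedSpace ℝ E] [ProperSpace E] [NormedAddCommGroup F] [NormedSpace ℝ F] {g : E → F}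
    {f : ℝ → E} {a b : ℝ} (hg : ContDiff ℝ 1 g) (hf : AbsolutelyContinuousOnInterval f a b) :
    AbsolutelyContinuousOnInterval (g ∘ f) a b := by
  obtain ⟨C, hC⟩ := hf.exists_bound
  obtain ⟨K, hK⟩ := hg.contDiffOn.exists_lipschitzOnWith one_ne_zero (convex_closedBall 0 C)
    (isCompact_closedBall 0 C)
  exact hK.comp_absolutelyContinuousOnInterval hf fun x hx => mem_closedBall_zero_iff.2 (hC x hx)

section Primitive

variable {ψ ψ' : ℝ → ℝ} {a b : ℝ}

theorem absolutelyContinuousOnInterval_of_eqOn_intervalIntegral (hab : a ≤ b)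
    (hψ' : IntervalIntegrable ψ' volume a b) (hψ : ∀ t ∈ Icc a b, ψ t = ∫ s in a..t, ψ' s) :
    AbsolutelyContinuousOnInterval ψ a b :=
  (hψ'.absolutelyContinuousOnInterval_intervalIntegral left_mem_uIcc).congr fun t ht =>
    (hψ t (uIcc_of_le hab ▸ ht)).symm

theorem ae_hasDerivAt_of_eqOn_intervalIntegral (hψ' : IntervalIntegrable ψ' volume a b)
    (hψ : ∀ t ∈ Icc a b, ψ t = ∫ s in a..t, ψ' s) :
    ∀ᵐ x, x ∈ Icc a b → HasDerivAt ψ (ψ' x) x := by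
  have hne : ∀ c : ℝ, ∀ᵐ x, x ≠ c := fun c => by simp [ae_iff, measure_singleton]
  filter_upwards [hψ'.ae_hasDerivAt_integral, hne a, hne b] with x hP hxa hxb hx
  have hx' : x ∈ Ioo a b := ⟨lt_of_le_of_ne hx.1 hxa.symm, lt_of_le_of_ne hx.2 hxb⟩
  refine (hP (Icc_subset_uIcc hx) a left_mem_uIcc).congr_of_eventuallyEq ?_
  filter_upwards [Ioo_mem_nhds hx'.1 hx'.2] with y hy using hψ y (Ioo_subset_Icc_self hy)

end Primitive

theorem ae_eq_zero_of_hasDerivAt_of_apply_eq {F : Type*} [NormedAddCommGroup F]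
    [NormedSpace ℝ F] (f : ℝ → F) (c : F) :
    ∀ᵐ x, f x = c → ∀ f', HasDerivAt f f' x → f' = 0 := by
  set S := f ⁻¹' {c}
  filter_upwards [(countable_setOfPred_isolated_right_within (s := S)).ae_notMem volume]
    with x hx hfx f' hf'
  have hacc : AccPt x (𝓟 (S ∩ Ioi x)) := by
    rw [accPt_principal_iff_nhdsWithin, sdiff_singleton_eq_self fun h => lt_irrefl x h.2]
    exact ⟨fun h => hx ⟨hfx, h⟩⟩
  have hconst : HasDerivWithinAt f 0 (S ∩ Ioi x) x :=
    (hasDerivWithinAt_const x _ c).congr (fun y hy => hy.1) hfx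
  exact hacc.uniqueDiffWithinAt.eq_deriv _ hf'.hasDerivWithinAt hconst

theorem rate_integrand_rpow_eq {σ β γ x d : ℝ} (hγ : γ < 1) (hx : 0 < x) :
    (1/(2*σ^2)) * (((1/(1-γ)) * x ^ (γ/(1-γ)) * d - β * x ^ (1/(1-γ)))
        / (x ^ (1/(1-γ))) ^ γ)^2
      = (1/(2*σ^2*(1-γ)^2)) * (d - β*(1-γ) * x)^2 := by
  have h1γ : 1 - γ ≠ 0 := by linarith
  have hpow : (x ^ (1/(1-γ))) ^ γ = x ^ (γ/(1-γ)) := by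
    rw [← Real.rpow_mul hx.le]
    field_simp
  have hsplit : x ^ (1/(1-γ)) = x ^ (γ/(1-γ)) * x := by
    rw [← Real.rpow_add_one hx.ne']
    congr 1
    field_simp
    ring
  have hc : x ^ (γ/(1-γ)) ≠ 0 := (Real.rpow_pos_of_pos hx _).ne'
  rw [hpow, hsplit]
  field_simp

theorem inverse_power_transform_rate_identity_general
    (σ β γ T : ℝ) (hγ : γ ∈ Set.Ico (1/2 : ℝ) 1) (hT : 0 < T)
    (ψ ψ' : ℝ → ℝ)
    (hψint : IntervalIntegrable ψ' volume 0 T)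
    (hψftc : ∀ t ∈ Set.Icc 0 T, ψ t = ∫ s in (0:ℝ)..t, ψ' s)
    (hψnn : ∀ t ∈ Set.Icc 0 T, 0 ≤ ψ t) :
    (∀ t ∈ Set.Icc 0 T, 0 ≤ ψ t ^ (1/(1-γ))) ∧
    (ψ 0) ^ (1/(1-γ)) = 0 ∧
    ∃ φ' : ℝ → ℝ, IntervalIntegrable φ' volume 0 T ∧
      (∀ t ∈ Set.Icc 0 T, ψ t ^ (1/(1-γ)) = ∫ s in (0:ℝ)..t, φ' s) ∧
      (∀ᵐ t ∂(volume.restrict (Set.Icc 0 T)),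
        φ' t = (1/(1-γ)) * ψ t ^ (γ/(1-γ)) * ψ' t) ∧
      (∫⁻ t in Set.Icc 0 T, ENNReal.ofReal
          ((1/(2*σ^2)) * (if ψ t ^ (1/(1-γ)) = 0 then 0 else
            ((φ' t - β * ψ t ^ (1/(1-γ))) / (ψ t ^ (1/(1-γ))) ^ γ)^2))) =
        ∫⁻ t in Set.Icc 0 T, ENNReal.ofReal
          ((1/(2*σ^2*(1-γ)^2)) * (ψ' t - β*(1-γ) * ψ t)^2) := by
  obtain ⟨hγ0, hγ1⟩ := hγ
  have hp : 1 ≤ 1/(1-γ) := by rw [le_div_iff₀ (by linarith)]; linarith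
  have hp0 : 1/(1-γ) ≠ 0 := by positivity
  have hψ0 : ψ 0 = 0 := by simpa using hψftc 0 ⟨le_rfl, hT.le⟩
  set φ : ℝ → ℝ := fun t => ψ t ^ (1/(1-γ))
  have hrpow : ContDiff ℝ 1 fun z : ℝ => z ^ (1/(1-γ)) :=
    Real.contDiff_rpow_const_of_le (n := 1) (by exact_mod_cast hp)
  have hφ : AbsolutelyContinuousOnInterval φ 0 T := hrpow.comp_absolutelyContinuousOnInterval
    (absolutelyContinuousOnInterval_of_eqOn_intervalIntegral hT.le hψint hψftc)
  have hψ' := ae_hasDerivAt_of_eqOn_intervalIntegral hψint hψftc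
  have hφ' : ∀ᵐ t, t ∈ Icc 0 T → deriv φ t = (1/(1-γ)) * ψ t ^ (γ/(1-γ)) * ψ' t := by
    filter_upwards [hψ'] with t ht hmem
    rw [((ht hmem).rpow_const (Or.inr hp)).deriv, show 1/(1-γ) - 1 = γ/(1-γ) by field_simp; ring]
    ring
  refine ⟨fun t ht => Real.rpow_nonneg (hψnn t ht) _, by rw [hψ0, Real.zero_rpow hp0], deriv φ,
    hφ.intervalIntegrable_deriv, fun t ht => ?_, (ae_restrict_iff' measurableSet_Icc).2 hφ', ?_⟩
  · rw [(hφ.mono (uIcc_subset_uIcc left_mem_uIcc (Icc_subset_uIcc ht))).integral_deriv_eq_sub]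
    simp only [φ, hψ0, Real.zero_rpow hp0, sub_zero]
  · refine lintegral_congr_ae ?_
    filter_upwards [ae_restrict_mem measurableSet_Icc, ae_restrict_of_ae hφ', ae_restrict_of_ae hψ',
      ae_restrict_of_ae (ae_eq_zero_of_hasDerivAt_of_apply_eq ψ 0)] with t ht hφt hψt hzero
    rcases (hψnn t ht).eq_or_lt with h0 | hpos
    · rw [hzero h0.symm _ (hψt ht), ← h0, Real.zero_rpow hp0, if_pos rfl]
      simp
    · rw [if_neg (Real.rpow_pos_of_pos hpos _).ne', hφt ht, rate_integrand_rpow_eq hγ1 hpos]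

/-- If `ψ ≥ 0` is absolutely continuous with `ψ(0)=0`, then
`φ = ψ^{1/(1−γ)}` is nonnegative, absolutely continuous with `φ(0)=0`, a.e. derivative
`φ' = (1/(1−γ))ψ^{γ/(1−γ)}ψ'`, and
`I_T(φ) = (1/(2σ²(1−γ)²))∫₀ᵀ(ψ' − β(1−γ)ψ)²` as an equality in `[0,∞]`. -/
theorem inverse_power_transform_rate_identity
    (σ β γ T : ℝ) (hσ : 0 < σ) (hγ : γ ∈ Set.Ico (1/2 : ℝ) 1) (hT : 0 < T)
    (ψ ψ' : ℝ → ℝ)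
    (hψint : IntervalIntegrable ψ' volume 0 T)
    (hψftc : ∀ t ∈ Set.Icc 0 T, ψ t = ∫ s in (0:ℝ)..t, ψ' s)
    (hψnn : ∀ t ∈ Set.Icc 0 T, 0 ≤ ψ t) :
    (∀ t ∈ Set.Icc 0 T, 0 ≤ ψ t ^ (1/(1-γ))) ∧
    (ψ 0) ^ (1/(1-γ)) = 0 ∧
    ∃ φ' : ℝ → ℝ, IntervalIntegrable φ' volume 0 T ∧
      (∀ t ∈ Set.Icc 0 T, ψ t ^ (1/(1-γ)) = ∫ s in (0:ℝ)..t, φ' s) ∧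
      (∀ᵐ t ∂(volume.restrict (Set.Icc 0 T)),
        φ' t = (1/(1-γ)) * ψ t ^ (γ/(1-γ)) * ψ' t) ∧
      (∫⁻ t in Set.Icc 0 T, ENNReal.ofReal
          ((1/(2*σ^2)) * (if ψ t ^ (1/(1-γ)) = 0 then 0 else
            ((φ' t - β * ψ t ^ (1/(1-γ))) / (ψ t ^ (1/(1-γ))) ^ γ)^2))) =
        ∫⁻ t in Set.Icc 0 T, ENNReal.ofReal
          ((1/(2*σ^2*(1-γ)^2)) * (ψ' t - β*(1-γ) * ψ t)^2) :=
  inverse_power_transform_rate_identity_general σ β γ T hγ hT ψ ψ' hψint hψftc hψnn
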